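/- arXiv:1504.07851 — 2 statements merged into one kernel-verified Lean document; each statement's English description precedes it below -/
import Mathlib

section
/- Let R and S be strings over an alphabet Σ, let C_max be a maximal cover of S with respect to R, and let C = ((i_1,j_1),…,(i_m,j_m)) be an arbitrary cover of S with respect to R. Then at most one block of C_max has its start position in S lying within the span of the last block of C, i.e., at most one block of C_max starts at a position p with p_m ≤ p ≤ |S|, where p_m = 1 + Σ_{k<m}(j_k − i_k + 1). -/
/-- `sub R i j` is the substring `R[i..j]` of `R` (1-indexed, inclusive). -/
def sub {σ : Type*} (R : List σ) (i j : ℕ) : List σ := (R.drop (i - 1)).take (j - i + 1)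

/-- `x` is a substring of `R`. -/
def IsSubstring {σ : Type*} (x R : List σ) : Prop := ∃ u v, R = u ++ x ++ v

/-- The string of `R` referred to by a block `(i, j)`. -/
def blockStr {σ : Type*} (R : List σ) (b : ℕ × ℕ) : List σ := sub R b.1 b.2

/-- `C` is a cover (relative compression) of `S` with respect to `R`. -/
def IsCover {σ : Type*} (R S : List σ) (C : List (ℕ × ℕ)) : Prop :=
  (∀ b ∈ C, 1 ≤ b.1 ∧ b.1 ≤ b.2 ∧ b.2 ≤ R.length) ∧
  S = (C.map (blockStr R)).flatten

/-- A cover is maximal if no two consecutive blocks concatenate to a substring of `R`. -/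
def IsMaximal {σ : Type*} (R : List σ) (C : List (ℕ × ℕ)) : Prop :=
  ∀ l : ℕ, ∀ h : l + 1 < C.length,
    ¬ IsSubstring (blockStr R (C[l]'(by omega)) ++ blockStr R (C[l + 1]'h)) R

/-- The length of the block `(i, j)`, i.e. `j - i + 1`. -/
def blockLen (b : ℕ × ℕ) : ℕ := b.2 - b.1 + 1

/-- The (1-indexed) start position in `S` of the block of `C` with 0-based index `l`,
i.e. `p_{l+1} = 1 + Σ_{k ≤ l} (j_k - i_k + 1)` in 1-indexed notation. -/
def startPos (C : List (ℕ × ℕ)) (l : ℕ) : ℕ := 1 + ((C.take l).map blockLen).sum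

/-!
If two blocks `l < l'` of the maximal cover started inside the last block of `C`, then the
suffix of `S` from the start of block `l` would lie inside that last block, hence inside `R`.
But this suffix begins with blocks `l` and `l + 1` of the maximal cover, whose concatenation
is therefore a substring of `R`, contradicting maximality.
-/

theorem isSubstring_iff_isInfix {σ : Type*} (x R : List σ) : IsSubstring x R ↔ x <:+: R :=
  ⟨fun ⟨u, v, h⟩ => ⟨u, v, h.symm⟩, fun ⟨u, v, h⟩ => ⟨u, v, h.symm⟩⟩

theorem blockStr_isInfix {σ : Type*} (R : List σ) (b : ℕ × ℕ) : blockStr R b <:+: R :=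
  (List.take_prefix _ _).isInfix.trans (List.drop_suffix _ R).isInfix

theorem length_blockStr {σ : Type*} (R : List σ) {b : ℕ × ℕ}
    (hb : 1 ≤ b.1 ∧ b.1 ≤ b.2 ∧ b.2 ≤ R.length) : (blockStr R b).length = blockLen b := by
  simp only [blockStr, sub, blockLen, List.length_take, List.length_drop]
  omega

namespace IsCover

variable {σ : Type*} {R S : List σ} {C : List (ℕ × ℕ)}

theorem drop_startPos (hC : IsCover R S C) (l : ℕ) :
    S.drop (startPos C l - 1) = ((C.drop l).map (blockStr R)).flatten := by
  obtain ⟨hb, hS⟩ := hC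
  have hlen : ((C.take l).map (blockStr R)).flatten.length = startPos C l - 1 := by
    rw [List.length_flatten, List.map_map, startPos, Nat.add_sub_cancel_left]
    congr 1
    exact List.map_congr_left fun b hbC => length_blockStr R (hb b (List.mem_of_mem_take hbC))
  rw [hS, ← List.take_append_drop l C, List.map_append, List.flatten_append, List.take_append_drop,
    ← hlen, List.drop_left]

theorem drop_startPos_last_isInfix (hC : IsCover R S C) :
    S.drop (startPos C (C.length - 1) - 1) <:+: R := by
  rw [hC.drop_startPos]
  rcases C.eq_nil_or_concat with rfl | ⟨C', b, rfl⟩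
  · exact List.nil_infix
  · simpa using blockStr_isInfix R b

theorem append_blockStr_prefix_drop_startPos (hC : IsCover R S C) {l : ℕ}
    (hl : l + 1 < C.length) :
    blockStr R C[l] ++ blockStr R C[l + 1] <+: S.drop (startPos C l - 1) := by
  rw [hC.drop_startPos, List.drop_eq_getElem_cons (by omega), List.drop_eq_getElem_cons hl]
  simp only [List.map_cons, List.flatten_cons, ← List.append_assoc]
  exact List.prefix_append _ _

end IsCover

theorem IsMaximal.not_drop_startPos_isInfix {σ : Type*} {R S : List σ} {C : List (ℕ × ℕ)}
    (hC : IsCover R S C) (hmax : IsMaximal R C) {l : ℕ} (hl : l + 1 < C.length) :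
    ¬ S.drop (startPos C l - 1) <:+: R := fun hinf =>
  hmax l hl <| (isSubstring_iff_isInfix _ _).2 <|
    (hC.append_blockStr_prefix_drop_startPos hl).isInfix.trans hinf

theorem at_most_one_block_starts_in_last_block_general {σ : Type*} (R S : List σ)
    (Cmax C : List (ℕ × ℕ))
    (hmax : IsCover R S Cmax) (hmaxmax : IsMaximal R Cmax)
    (hC : IsCover R S C) :
    ((Finset.range Cmax.length).filter (fun l' =>
        startPos C (C.length - 1) ≤ startPos Cmax l' ∧
        startPos Cmax l' ≤ S.length)).card ≤ 1 := by
  have no_later_block {l l' : ℕ} (hll' : l < l') (hl' : l' < Cmax.length)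
      (hstart : startPos C (C.length - 1) ≤ startPos Cmax l) : False :=
    hmaxmax.not_drop_startPos_isInfix hmax (by omega) <|
      (List.drop_suffix_drop_left S (Nat.sub_le_sub_right hstart 1)).isInfix.trans
        hC.drop_startPos_last_isInfix
  rw [Finset.card_le_one]
  intro a ha b hb
  simp only [Finset.mem_filter, Finset.mem_range] at ha hb
  by_contra hab
  rcases Nat.lt_or_gt_of_ne hab with h | h
  · exact no_later_block h hb.1 ha.2.1
  · exact no_later_block h ha.1 hb.2.1

/-- At most one block of a maximal cover `C_max` starts at a position lying within the
span of the last block of an arbitrary cover `C` (that span ends at position `|S|`). -/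
theorem at_most_one_block_starts_in_last_block {σ : Type*} (R S : List σ)
    (Cmax C : List (ℕ × ℕ))
    (hmax : IsCover R S Cmax) (hmaxmax : IsMaximal R Cmax)
    (hC : IsCover R S C) (hne : C ≠ []) :
    ((Finset.range Cmax.length).filter (fun l' =>
        startPos C (C.length - 1) ≤ startPos Cmax l' ∧
        startPos Cmax l' ≤ S.length)).card ≤ 1 :=
  at_most_one_block_starts_in_last_block_general R S Cmax C hmax hmaxmax hC
end

section
/- Let R and S be strings over an alphabet Σ such that S admits a cover with respect to R, and let n be the minimum size of a cover of S with respect to R. Then every maximal cover C_max of S with respect to R satisfies |C_max| ≤ 2n − 1. -/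
/-!
Cut `S` at the block boundaries of a cover `C` with `n` blocks: there are `n - 1` interior cut
points. Two consecutive blocks of a maximal cover never lie inside a single block of `C`, since
their concatenation would then be a substring of `R`; so each such pair strictly contains an
interior cut point. The pairs of blocks `(1, 2), (3, 4), …` are disjoint, hence
`⌊m / 2⌋ ≤ n - 1`, that is `m ≤ 2n - 1`.
-/

section Segmentation

variable {α : Type*}

lemma List.extract_infix_extract (S : List α) {a b c d : ℕ} (hca : c ≤ a) (hbd : b ≤ d) :
    S.extract a b <:+: S.extract c d := by
  have h : ((S.extract c d).drop (a - c)).take (b - a) = S.extract a b := by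
    simp only [List.extract_eq_take_drop, List.drop_take, List.drop_drop, List.take_take]
    rw [show c + (a - c) = a by omega, show min (b - a) (d - c - (a - c)) = b - a by omega]
  rw [← h]
  exact (List.take_prefix _ _).isInfix.trans (List.drop_suffix _ _).isInfix

/-- The position in `L.flatten` at which the block `L[k]` starts. -/
def blockOffset (L : List (List α)) (k : ℕ) : ℕ := ((L.map List.length).take k).sum

variable (L : List (List α))

lemma blockOffset_mono : Monotone (blockOffset L) := List.monotone_sum_take _

@[simp]
lemma blockOffset_zero : blockOffset L 0 = 0 := by simp [blockOffset]

lemma blockOffset_of_length_le {k : ℕ} (hk : L.length ≤ k) :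
    blockOffset L k = L.flatten.length := by
  rw [blockOffset, List.take_of_length_le (by simpa using hk), List.length_flatten]

lemma blockOffset_succ {k : ℕ} (hk : k < L.length) :
    blockOffset L (k + 1) = blockOffset L k + L[k].length := by
  rw [blockOffset, blockOffset, List.sum_take_succ _ _ (by simpa using hk), List.getElem_map]

lemma extract_blockOffset {i j : ℕ} (hij : i ≤ j) :
    L.flatten.extract (blockOffset L i) (blockOffset L j) = (L.extract i j).flatten := by
  have hi : blockOffset L i = blockOffset (L.take j) i := by
    simp [blockOffset, List.map_take, List.take_take, min_eq_left hij]
  rw [List.extract_eq_take_drop, ← List.drop_take, hi]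
  simp only [blockOffset]
  rw [List.take_sum_flatten, List.drop_sum_flatten, List.extract_eq_take_drop, List.drop_take]

lemma extract_blockOffset_succ {k : ℕ} (hk : k < L.length) :
    L.flatten.extract (blockOffset L k) (blockOffset L (k + 1)) = L[k] := by
  rw [extract_blockOffset L (by omega), List.extract_eq_take_drop, List.drop_eq_getElem_cons hk]
  simp only [Nat.add_sub_cancel_left, List.take_succ_cons, List.take_zero, List.flatten_cons,
    List.flatten_nil, List.append_nil]

lemma extract_blockOffset_add_two {k : ℕ} (hk : k + 1 < L.length) :
    L.flatten.extract (blockOffset L k) (blockOffset L (k + 2)) = L[k] ++ L[k + 1] := by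
  rw [extract_blockOffset L (by omega), List.extract_eq_take_drop,
    List.drop_eq_getElem_cons (by omega), List.drop_eq_getElem_cons hk]
  simp only [Nat.add_sub_cancel_left, List.take_succ_cons, List.take_zero, List.flatten_cons,
    List.flatten_nil, List.append_nil]

lemma exists_blockOffset_mem_Ioo_or_infix {a : ℕ} (b : ℕ) (ha : a < L.flatten.length) :
    (∃ k, blockOffset L k ∈ Set.Ioo a b) ∨
      ∃ k, ∃ hk : k < L.length, L.flatten.extract a b <:+: L[k] := by
  have hex : ∃ k, a < blockOffset L (k + 1) :=
    ⟨L.length, by rwa [blockOffset_of_length_le L (by omega)]⟩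
  set k := Nat.find hex
  have hk_lo : blockOffset L k ≤ a := by
    rcases Nat.eq_zero_or_pos k with h | h
    · simp [h]
    · have hprev : ¬a < blockOffset L (k - 1 + 1) := Nat.find_min hex (Nat.sub_lt h one_pos)
      rwa [Nat.sub_add_cancel h, not_lt] at hprev
  have hk_len : k < L.length := by
    by_contra! h
    rw [blockOffset_of_length_le L h] at hk_lo
    omega
  by_cases hk_hi : blockOffset L (k + 1) < b
  · exact Or.inl ⟨k + 1, Nat.find_spec hex, hk_hi⟩
  · refine Or.inr ⟨k, hk_len, ?_⟩
    rw [← extract_blockOffset_succ L hk_len]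
    exact List.extract_infix_extract _ hk_lo (not_lt.mp hk_hi)

variable {L} {M : List (List α)}

lemma exists_interior_blockOffset_of_not_infix (hLM : L.flatten = M.flatten) {l : ℕ}
    (hl : l + 1 < L.length) (hne : L[l] ≠ [])
    (hsplit : ∀ k (hk : k < M.length), ¬ L[l] ++ L[l + 1] <:+: M[k]) :
    ∃ k, 0 < k ∧ k < M.length ∧
      blockOffset M k ∈ Set.Ioo (blockOffset L l) (blockOffset L (l + 2)) := by
  have hlt : blockOffset L l < blockOffset L (l + 1) := by
    rw [blockOffset_succ L (by omega)]
    simpa [List.length_pos_iff] using hne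
  have htop : blockOffset L (l + 2) ≤ M.flatten.length := by
    rw [← hLM, ← blockOffset_of_length_le L le_rfl]
    exact blockOffset_mono L (by omega)
  have hwin : M.flatten.extract (blockOffset L l) (blockOffset L (l + 2)) = L[l] ++ L[l + 1] := by
    rw [← hLM, extract_blockOffset_add_two L hl]
  rcases exists_blockOffset_mem_Ioo_or_infix M (blockOffset L (l + 2))
      (lt_of_lt_of_le hlt (htop.trans' (blockOffset_mono L (by omega)))) with
    ⟨k, hk_lo, hk_hi⟩ | ⟨k, hk, hinfix⟩
  · refine ⟨k, ?_, ?_, hk_lo, hk_hi⟩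
    · refine Nat.pos_of_ne_zero ?_
      rintro rfl
      simp at hk_lo
    · by_contra! h
      rw [blockOffset_of_length_le M h] at hk_hi
      omega
  · exact absurd (hwin ▸ hinfix) (hsplit k hk)

theorem length_le_two_mul_sub_one_of_not_infix (hLM : L.flatten = M.flatten)
    (hne : ∀ x ∈ L, x ≠ [])
    (hsplit : ∀ l (hl : l + 1 < L.length) k (hk : k < M.length), ¬ L[l] ++ L[l + 1] <:+: M[k]) :
    L.length ≤ 2 * M.length - 1 := by
  have hcut : ∀ t, 2 * t + 1 < L.length → ∃ k, 0 < k ∧ k < M.length ∧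
      blockOffset M k ∈ Set.Ioo (blockOffset L (2 * t)) (blockOffset L (2 * t + 2)) :=
    fun t ht => exists_interior_blockOffset_of_not_infix hLM ht (hne _ (List.getElem_mem _))
      (hsplit _ ht)
  choose! k hk using hcut
  -- the windows `L[2t] ++ L[2t+1]` are disjoint, so the cuts inside them are distinct
  have hmono : StrictMonoOn k (Finset.range (L.length / 2)) := by
    intro t ht t' ht' htt'
    simp only [Finset.coe_range, Set.mem_Iio] at ht ht'
    refine (blockOffset_mono M).reflect_lt ?_
    calc blockOffset M (k t) < blockOffset L (2 * t + 2) := (hk t (by omega)).2.2.2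
      _ ≤ blockOffset L (2 * t') := blockOffset_mono L (by omega)
      _ < blockOffset M (k t') := (hk t' (by omega)).2.2.1
  have hcard := Finset.card_le_card_of_injOn k
    (fun t ht => by
      simp only [Finset.coe_range, Set.mem_Iio] at ht
      simpa using ⟨(hk t (by omega)).1, (hk t (by omega)).2.1⟩)
    hmono.injOn (t := Finset.Ioo 0 M.length)
  simp only [Finset.card_range, Nat.card_Ioo] at hcard
  have hM : 0 < L.length → 0 < M.length := by
    intro hL
    refine List.length_pos_iff.mpr fun hM => hne _ (List.getElem_mem hL) ?_
    have hx := List.infix_of_mem_flatten (List.getElem_mem hL)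
    rwa [hLM, hM, List.flatten_nil, List.infix_nil] at hx
  omega

end Segmentation

section Cover

variable {σ : Type*}

lemma isSubstring_iff_infix {x R : List σ} : IsSubstring x R ↔ x <:+: R :=
  ⟨fun ⟨u, v, h⟩ => ⟨u, v, h.symm⟩, fun ⟨u, v, h⟩ => ⟨u, v, h.symm⟩⟩

lemma blockStr_infix (R : List σ) (b : ℕ × ℕ) : blockStr R b <:+: R :=
  (List.take_prefix _ _).isInfix.trans (List.drop_suffix _ _).isInfix

lemma blockStr_ne_nil {R : List σ} {b : ℕ × ℕ}
    (hb : 1 ≤ b.1 ∧ b.1 ≤ b.2 ∧ b.2 ≤ R.length) : blockStr R b ≠ [] := by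
  rw [← List.length_pos_iff, blockStr, sub, List.length_take, List.length_drop]
  omega

lemma IsMaximal.not_infix_blockStr {R : List σ} {C : List (ℕ × ℕ)} (hmax : IsMaximal R C)
    {l : ℕ} (hl : l + 1 < C.length) (b : ℕ × ℕ) :
    ¬ blockStr R C[l] ++ blockStr R C[l + 1] <:+: blockStr R b :=
  fun h => hmax l hl (isSubstring_iff_infix.mpr (h.trans (blockStr_infix R b)))

end Cover

theorem maximal_cover_le_twice_opt_general {σ : Type*} (R S : List σ) (n : ℕ)
    (hopt : ∃ C, IsCover R S C ∧ C.length = n) :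
    ∀ Cmax, IsCover R S Cmax → IsMaximal R Cmax → Cmax.length ≤ 2 * n - 1 := by
  intro Cmax hCmax hmax
  obtain ⟨C, hC, rfl⟩ := hopt
  have h := length_le_two_mul_sub_one_of_not_infix (L := Cmax.map (blockStr R))
    (M := C.map (blockStr R)) (hCmax.2.symm.trans hC.2) ?_ ?_
  · simpa using h
  · simp only [List.mem_map]
    rintro _ ⟨b, hb, rfl⟩
    exact blockStr_ne_nil (hCmax.1 b hb)
  · intro l hl k hk
    simpa using hmax.not_infix_blockStr (by simpa using hl) (C[k]'(by simpa using hk))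

/-- If `n` is the minimum size of a cover of `S` w.r.t. `R`, then every maximal
cover `C_max` of `S` w.r.t. `R` satisfies `|C_max| ≤ 2n - 1`. -/
theorem maximal_cover_le_twice_opt {σ : Type*} (R S : List σ) (n : ℕ)
    (hopt : ∃ C, IsCover R S C ∧ C.length = n)
    (hmin : ∀ C, IsCover R S C → n ≤ C.length) :
    ∀ Cmax, IsCover R S Cmax → IsMaximal R Cmax → Cmax.length ≤ 2 * n - 1 :=
  maximal_cover_le_twice_opt_general R S n hopt
end
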